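/- Let L be the Laplacian matrix of a strongly connected directed graph on N nodes, and let A^j = diag(a_{1j}, ..., a_{Nj}) be the diagonal matrix formed by the j-th column of the adjacency matrix, where node j has at least one out-neighbor (some a_{ij} = 1 with i ≠ j). Then the matrix L^j = L + A^j is a nonsingular M-matrix: its off-diagonal entries are nonpositive and all its eigenvalues have positive real parts. -/

import Mathlib

/-!
Write `Lʲ = D - A` with `D = diag(∑ₖ a_pk + a_pj)`. Suppose `Lʲ x = μ x` with `x ≠ 0` and
`Re μ ≤ 0`, and let `p` be a coordinate where `‖x p‖` is maximal. Since `‖D_pp - μ‖ ≥ D_pp`, the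
`p`-th row of the eigen-equation gives `D_pp ‖x p‖ ≤ ∑ₖ a_pk ‖x k‖ ≤ (D_pp - a_pj) ‖x p‖`. Hence
`a_pj = 0`, and every `k` with `a_pk ≠ 0` is again a maximal coordinate. Following backwards a
directed path to `p` from a node `i` with `a_ij = 1`, `i` is maximal too, contradicting `a_ij = 0`.
-/

open Matrix Finset

namespace Matrix

variable {ι R : Type*} [Fintype ι] [DecidableEq ι] [Ring R]

def laplacian (a : Matrix ι ι R) : Matrix ι ι R :=
  diagonal (fun i => ∑ k, a i k) - a

theorem laplacian_add_diagonal (a : Matrix ι ι R) (s : ι → R) :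
    laplacian a + diagonal s = diagonal (fun i => ∑ k, a i k + s i) - a := by
  rw [laplacian, sub_add_eq_add_sub, diagonal_add]

theorem laplacian_eq_of_diag_eq_zero {a : Matrix ι ι R} (ha : ∀ i, a i i = 0) :
    laplacian a = of fun i k => if i = k then ∑ m, a i m else -a i k := by
  ext i k
  rcases eq_or_ne i k with rfl | hik
  · simp [laplacian, ha]
  · simp [laplacian, hik]

theorem laplacian_add_diagonal_apply_of_ne (a : Matrix ι ι R) (s : ι → R) {i k : ι}
    (hik : i ≠ k) : (laplacian a + diagonal s) i k = -a i k := by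
  rw [laplacian_add_diagonal, sub_apply, diagonal_apply_ne _ hik, zero_sub]

theorem diagonal_sub_map_ofReal_mulVec_apply (d : ι → ℝ) (a : Matrix ι ι ℝ) (x : ι → ℂ)
    (p : ι) :
    ((diagonal d - a).map Complex.ofReal *ᵥ x) p = d p * x p - ∑ k, (a p k : ℂ) * x k := by
  simp [mulVec, dotProduct, sub_mul, sum_sub_distrib, diagonal_apply,
    apply_ite Complex.ofReal]

theorem exists_mulVec_eq_smul_of_mem_spectrum {K : Type*} [Field K] {M : Matrix ι ι K} {μ : K}
    (hμ : μ ∈ spectrum K M) : ∃ x ≠ 0, M *ᵥ x = μ • x := by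
  rw [← spectrum_toLin', ← Module.End.hasEigenvalue_iff_mem_spectrum] at hμ
  obtain ⟨x, hx, hx0⟩ := hμ.exists_hasEigenvector
  exact ⟨x, hx0, Module.End.mem_eigenspace_iff.mp hx⟩

section Eigenvector

variable {a : Matrix ι ι ℝ} {s : ι → ℝ} {μ : ℂ} {x : ι → ℂ}

theorem sum_add_mul_norm_le_of_mulVec_eq_smul (ha : ∀ i k, 0 ≤ a i k) (hμ : μ.re ≤ 0)
    (hx : (laplacian a + diagonal s).map Complex.ofReal *ᵥ x = μ • x) (p : ι) :
    (∑ k, a p k + s p) * ‖x p‖ ≤ ∑ k, a p k * ‖x k‖ := by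
  set d := ∑ k, a p k + s p
  have hrow : ((d : ℂ) - μ) * x p = ∑ k, (a p k : ℂ) * x k := by
    have h := congrFun hx p
    rw [laplacian_add_diagonal, diagonal_sub_map_ofReal_mulVec_apply, Pi.smul_apply,
      smul_eq_mul] at h
    linear_combination h
  calc d * ‖x p‖ ≤ ‖(d : ℂ) - μ‖ * ‖x p‖ := by
        gcongr
        calc d ≤ ((d : ℂ) - μ).re := by simp [hμ]
          _ ≤ _ := Complex.re_le_norm _
    _ = ‖∑ k, (a p k : ℂ) * x k‖ := by rw [← norm_mul, hrow]
    _ ≤ ∑ k, ‖(a p k : ℂ) * x k‖ := norm_sum_le _ _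
    _ = ∑ k, a p k * ‖x k‖ := by
        simp only [norm_mul, Complex.norm_of_nonneg (ha p _)]

theorem nonpos_of_forall_norm_le_of_mulVec_eq_smul (ha : ∀ i k, 0 ≤ a i k) (hμ : μ.re ≤ 0)
    (hx : (laplacian a + diagonal s).map Complex.ofReal *ᵥ x = μ • x) (hx0 : x ≠ 0) {p : ι}
    (hp : ∀ k, ‖x k‖ ≤ ‖x p‖) : s p ≤ 0 := by
  have hpos : 0 < ‖x p‖ := by
    obtain ⟨k, hk⟩ := Function.ne_iff.mp hx0
    exact (norm_pos_iff.mpr hk).trans_le (hp k)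
  have hbound : ∑ k, a p k * ‖x k‖ ≤ (∑ k, a p k) * ‖x p‖ := by
    rw [sum_mul]
    gcongr with k
    exacts [ha p k, hp k]
  have := sum_add_mul_norm_le_of_mulVec_eq_smul ha hμ hx p
  nlinarith

theorem norm_eq_of_forall_norm_le_of_mulVec_eq_smul (ha : ∀ i k, 0 ≤ a i k)
    (hs : ∀ i, 0 ≤ s i) (hμ : μ.re ≤ 0)
    (hx : (laplacian a + diagonal s).map Complex.ofReal *ᵥ x = μ • x) {p k : ι}
    (hp : ∀ k, ‖x k‖ ≤ ‖x p‖) (hpk : a p k ≠ 0) : ‖x k‖ = ‖x p‖ := by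
  have hgap : ∀ m ∈ univ, 0 ≤ a p m * (‖x p‖ - ‖x m‖) :=
    fun m _ => mul_nonneg (ha p m) (sub_nonneg.mpr (hp m))
  have hsum : ∑ m, a p m * (‖x p‖ - ‖x m‖) = 0 := by
    refine le_antisymm ?_ (sum_nonneg hgap)
    have := sum_add_mul_norm_le_of_mulVec_eq_smul ha hμ hx p
    simp only [mul_sub, sum_sub_distrib, ← sum_mul]
    nlinarith [mul_nonneg (hs p) (norm_nonneg (x p))]
  have := (sum_eq_zero_iff_of_nonneg hgap).mp hsum k (mem_univ k)
  rcases mul_eq_zero.mp this with h | h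
  · exact absurd h hpk
  · linarith

theorem forall_norm_le_of_reflTransGen (ha : ∀ i k, 0 ≤ a i k) (hs : ∀ i, 0 ≤ s i)
    (hμ : μ.re ≤ 0) (hx : (laplacian a + diagonal s).map Complex.ofReal *ᵥ x = μ • x) {i p : ι}
    (hip : Relation.ReflTransGen (fun u v => a v u ≠ 0) i p) (hp : ∀ k, ‖x k‖ ≤ ‖x p‖) :
    ∀ k, ‖x k‖ ≤ ‖x i‖ := by
  induction hip using Relation.ReflTransGen.head_induction_on with
  | refl => exact hp
  | head hic _ hc =>
    rw [norm_eq_of_forall_norm_le_of_mulVec_eq_smul ha hs hμ hx hc hic]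
    exact hc

end Eigenvector

theorem re_pos_of_mem_spectrum_laplacian_add_diagonal {a : Matrix ι ι ℝ} {s : ι → ℝ}
    (ha : ∀ i k, 0 ≤ a i k) (hs : ∀ i, 0 ≤ s i)
    (hreach : ∀ k, ∃ i, 0 < s i ∧ Relation.ReflTransGen (fun u v => a v u ≠ 0) i k) {μ : ℂ}
    (hμ : μ ∈ spectrum ℂ ((laplacian a + diagonal s).map Complex.ofReal)) : 0 < μ.re := by
  by_contra! hre
  obtain ⟨x, hx0, hx⟩ := exists_mulVec_eq_smul_of_mem_spectrum hμ
  have : Nonempty ι := ⟨(Function.ne_iff.mp hx0).choose⟩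
  obtain ⟨p, hp⟩ := Finite.exists_max fun k => ‖x k‖
  obtain ⟨i, hsi, hip⟩ := hreach p
  have hi := forall_norm_le_of_reflTransGen ha hs hre hx hip hp
  exact (nonpos_of_forall_norm_le_of_mulVec_eq_smul ha hre hx hx0 hi).not_gt hsi

end Matrix

theorem laplacian_plus_diag_nonsingular_M {N : ℕ} (a : Fin N → Fin N → ℝ)
    (hval : ∀ i k, a i k = 0 ∨ a i k = 1)
    (hdiag : ∀ i, a i i = 0)
    -- strong connectivity: for all ordered pairs of distinct nodes there is a
    -- directed path; (j,i) ∈ E (an edge from j to i) iff a i j = 1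
    (hconn : ∀ i k : Fin N, i ≠ k → Relation.TransGen (fun u v => a v u = 1) i k)
    (j : Fin N) (hout : ∃ i, i ≠ j ∧ a i j = 1) :
    let L : Matrix (Fin N) (Fin N) ℝ :=
      fun i k => if i = k then ∑ m, a i m else -(a i k)
    let Lj : Matrix (Fin N) (Fin N) ℝ := L + Matrix.diagonal (fun i => a i j)
    (∀ i k, i ≠ k → Lj i k ≤ 0) ∧
      (∀ μ ∈ spectrum ℂ (Lj.map Complex.ofReal), 0 < μ.re) := by
  intro L Lj
  have hLj : Lj = laplacian (of a) + diagonal (fun i => a i j) := by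
    rw [laplacian_eq_of_diag_eq_zero (a := of a) hdiag]
    rfl
  have ha : ∀ i k, 0 ≤ a i k := fun i k => by rcases hval i k with h | h <;> simp [h]
  refine ⟨fun i k hik => ?_, fun μ hμ => ?_⟩
  · rw [hLj, laplacian_add_diagonal_apply_of_ne _ _ hik, neg_nonpos]
    exact ha i k
  · obtain ⟨i₀, -, hi₀⟩ := hout
    have hreach (k : Fin N) : Relation.ReflTransGen (fun u v => a v u ≠ 0) i₀ k := by
      rcases eq_or_ne i₀ k with rfl | hk
      · exact .refl
      · refine (Relation.TransGen.mono ?_ _ _ (hconn i₀ k hk)).to_reflTransGen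
        exact fun u v h => h ▸ one_ne_zero
    exact re_pos_of_mem_spectrum_laplacian_add_diagonal ha (fun i => ha i j)
      (fun k => ⟨i₀, hi₀ ▸ one_pos, hreach k⟩) (hLj ▸ hμ)
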